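/- For every number of layers L and every choice of layer data as in the EIGN recursion, and for all direction-consistent orientations O, Ô and all inputs X_equ ∈ ℂ^{E×d_equ}, X_inv ∈ ℂ^{E×d_inv}, the invariant output satisfies H^L_inv(Δ_{O,Ô} · X_equ, X_inv, Ô) = H^L_inv(X_equ, X_inv, O); that is, the invariant output of EIGN is a jointly orientation-invariant mapping. -/

import Mathlib

/-! Reversing an undirected edge negates its column of the equivariant boundary operator, and
directed columns never change, so `B_equ(Ô) Δ = B_equ(O)` for the diagonal sign matrix
`Δ = Δ_{O,Ô}`. By induction on the layers, the run on `(Δ X_equ, X_inv, Ô)` produces `Δ` times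
the equivariant features and the same invariant features as the run on `(X_equ, X_inv, O)`:
using `Δᴴ = Δ` and `Δ² = 1`, every sign `Δ` introduces is either cancelled inside
`B_equ(Ô) Δ = B_equ(O)`, or carried through `σ_equ` (odd) and `⊙`, or erased by `abs`. -/

open Matrix

/-- `O` assigns to each edge either its endpoint pair `(s e, t e)` or the reversed pair. -/
def IsOrientation {V E : Type*} (s t : E → V) (O : E → V × V) : Prop :=
  ∀ e, O e = (s e, t e) ∨ O e = (t e, s e)

/-- A direction-consistent orientation: an orientation which agrees with the direction
`(s e, t e)` on every directed edge. -/
def DirConsistent {V E : Type*} (s t : E → V) (dir : E → Bool) (O : E → V × V) : Prop :=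
  IsOrientation s t O ∧ ∀ e, dir e = true → O e = (s e, t e)

/-- The magnetic equivariant boundary operator. -/
noncomputable def Bequ {V E : Type*} [DecidableEq V] (q : ℝ) (s t : E → V) (dir : E → Bool)
    (O : E → V × V) : Matrix V E ℂ :=
  Matrix.of fun v e =>
    if dir e then
      if v = s e then -Complex.exp (Complex.I * (Real.pi * q : ℂ))
      else if v = t e then Complex.exp (-(Complex.I * (Real.pi * q : ℂ)))
      else 0
    else
      if v = (O e).1 then -1
      else if v = (O e).2 then 1
      else 0

/-- The magnetic invariant boundary operator. -/
noncomputable def Binv {V E : Type*} [DecidableEq V] (q : ℝ) (s t : E → V) (dir : E → Bool) :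
    Matrix V E ℂ :=
  Matrix.of fun v e =>
    if dir e then
      if v = s e then Complex.exp (Complex.I * (Real.pi * q : ℂ))
      else if v = t e then Complex.exp (-(Complex.I * (Real.pi * q : ℂ)))
      else 0
    else
      if v = s e ∨ v = t e then 1 else 0

/-- The orientation-change matrix `Δ_{O,Ô}`. -/
noncomputable def Delta {V E : Type*} [DecidableEq V] [DecidableEq E] (O Ohat : E → V × V) :
    Matrix E E ℂ :=
  Matrix.diagonal fun e => if O e = Ohat e then 1 else -1

/-- The EIGN recursion: given boundary data `(q, s, t, dir)`, activations `σe, σi`,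
per-layer feature dimensions `de, di` (with intermediate node-level dimensions
`ke, kie, ki, kei`), per-layer node feature transformations `hequ, hie, hinv, hei`,
per-layer weight matrices, an orientation `O`, and inputs `Xe, Xi`, this returns for each
layer `l` the pair `(H^l_equ, H^l_inv)` of equivariant and invariant representations. -/
noncomputable def EIGN {V E : Type} [Fintype V] [Fintype E] [DecidableEq V]
    (q : ℝ) (s t : E → V) (dir : E → Bool)
    (σe σi : ℂ → ℂ)
    (de di ke kie ki kei : ℕ → ℕ)
    (hequ : ∀ l, Matrix V (Fin (de l)) ℂ → Matrix V (Fin (ke l)) ℂ)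
    (hie : ∀ l, Matrix V (Fin (di l)) ℂ → Matrix V (Fin (kie l)) ℂ)
    (hinv : ∀ l, Matrix V (Fin (di l)) ℂ → Matrix V (Fin (ki l)) ℂ)
    (hei : ∀ l, Matrix V (Fin (de l)) ℂ → Matrix V (Fin (kei l)) ℂ)
    (Wee : ∀ l, Matrix (Fin (ke l)) (Fin (de (l + 1))) ℂ)
    (Wie : ∀ l, Matrix (Fin (kie l)) (Fin (de (l + 1))) ℂ)
    (We : ∀ l, Matrix (Fin (de l)) (Fin (de (l + 1))) ℂ)
    (Wii : ∀ l, Matrix (Fin (ki l)) (Fin (di (l + 1))) ℂ)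
    (Wei : ∀ l, Matrix (Fin (kei l)) (Fin (di (l + 1))) ℂ)
    (Wi : ∀ l, Matrix (Fin (di l)) (Fin (di (l + 1))) ℂ)
    (WFee : ∀ l, Matrix (Fin (de (l + 1))) (Fin (de (l + 1))) ℂ)
    (WFie : ∀ l, Matrix (Fin (di (l + 1))) (Fin (de (l + 1))) ℂ)
    (WFii : ∀ l, Matrix (Fin (di (l + 1))) (Fin (di (l + 1))) ℂ)
    (WFei : ∀ l, Matrix (Fin (de (l + 1))) (Fin (di (l + 1))) ℂ)
    (O : E → V × V)
    (Xe : Matrix E (Fin (de 0)) ℂ) (Xi : Matrix E (Fin (di 0)) ℂ) :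
    (l : ℕ) → Matrix E (Fin (de l)) ℂ × Matrix E (Fin (di l)) ℂ
  | 0 => (Xe, Xi)
  | l + 1 =>
      let H := EIGN q s t dir σe σi de di ke kie ki kei hequ hie hinv hei
        Wee Wie We Wii Wei Wi WFee WFie WFii WFei O Xe Xi l
      let Ze := ((Bequ q s t dir O)ᴴ * hequ l (Bequ q s t dir O * H.1) * Wee l
                + (Bequ q s t dir O)ᴴ * hie l (Binv q s t dir * H.2) * Wie l
                + H.1 * We l).map σe
      let Zi := ((Binv q s t dir)ᴴ * hinv l (Binv q s t dir * H.2) * Wii l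
                + (Binv q s t dir)ᴴ * hei l (Bequ q s t dir O * H.1) * Wei l
                + H.2 * Wi l).map σi
      (((Ze * WFee l).hadamard (Zi * WFie l) + Ze).map σe,
       ((Zi * WFii l).hadamard ((Ze * WFei l).map fun z => ((‖z‖ : ℝ) : ℂ)) + Zi).map σi)


section SignDiagonal

variable {R m n : Type*} [DecidableEq m]

theorem diagonal_mul_map_of_odd [Fintype m] [Ring R] {d : m → R}
    (hd : ∀ i, d i = 1 ∨ d i = -1) {σ : R → R} (hσ : ∀ x, σ (-x) = -σ x) (M : Matrix m n R) :
    (diagonal d * M).map σ = diagonal d * M.map σ := by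
  ext i j
  rcases hd i with h | h <;> simp [diagonal_mul, h, hσ]

theorem diagonal_mul_hadamard [Fintype m] [NonUnitalSemiring R] (d : m → R)
    (A B : Matrix m n R) :
    (diagonal d * A) ⊙ B = diagonal d * (A ⊙ B) := by
  ext i j
  simp [diagonal_mul, mul_assoc]

theorem diagonal_mul_map_norm [Fintype m] {d : m → ℂ} (hd : ∀ i, ‖d i‖ = 1)
    (A : Matrix m n ℂ) :
    (diagonal d * A).map (fun z => ((‖z‖ : ℝ) : ℂ)) = A.map (fun z => ((‖z‖ : ℝ) : ℂ)) := by
  ext i j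
  simp [diagonal_mul, hd]

theorem diagonal_mul_diagonal_self_of_sign [Fintype m] [Ring R] {d : m → R}
    (hd : ∀ i, d i = 1 ∨ d i = -1) : diagonal d * diagonal d = 1 := by
  rw [diagonal_mul_diagonal, ← diagonal_one]
  congr 1
  ext i
  rcases hd i with h | h <;> simp [h]

theorem diagonal_conjTranspose_of_sign [Ring R] [StarRing R] {d : m → R}
    (hd : ∀ i, d i = 1 ∨ d i = -1) : (diagonal d)ᴴ = diagonal d := by
  rw [diagonal_conjTranspose]
  congr 1
  ext i
  rcases hd i with h | h <;> simp [h]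

end SignDiagonal

theorem IsOrientation.eq_swap_of_ne {V E : Type*} {s t : E → V} {O Ohat : E → V × V}
    (hO : IsOrientation s t O) (hOhat : IsOrientation s t Ohat) {e : E} (hne : O e ≠ Ohat e) :
    Ohat e = (O e).swap := by
  rcases hO e with h | h <;> rcases hOhat e with h' | h' <;> simp_all

section Boundary

variable {V E : Type*} [DecidableEq V] (q : ℝ) (s t : E → V) (dir : E → Bool)

theorem Bequ_apply_congr {O Ohat : E → V × V} {e : E} (h : O e = Ohat e) (v : V) :
    Bequ q s t dir Ohat v e = Bequ q s t dir O v e := by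
  simp [Bequ, h]

theorem Bequ_apply_swap {O Ohat : E → V × V} {e : E} (hdir : dir e = false)
    (hswap : Ohat e = (O e).swap) (hne : O e ≠ Ohat e) (v : V) :
    Bequ q s t dir Ohat v e = -Bequ q s t dir O v e := by
  have hab : (O e).1 ≠ (O e).2 := fun h => hne (hswap ▸ Prod.ext h h.symm)
  simp only [Bequ, of_apply, hdir, hswap, Prod.fst_swap, Prod.snd_swap, Bool.false_eq_true,
    if_false]
  split_ifs <;> simp_all

theorem Bequ_mul_Delta [Fintype E] [DecidableEq E] {O Ohat : E → V × V}
    (hO : DirConsistent s t dir O) (hOhat : DirConsistent s t dir Ohat) :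
    Bequ q s t dir Ohat * Delta O Ohat = Bequ q s t dir O := by
  ext v e
  rw [Delta, mul_diagonal]
  by_cases heq : O e = Ohat e
  · simp [heq, Bequ_apply_congr q s t dir heq]
  · have hdir : dir e = false := by
      by_contra h
      exact heq ((hO.2 e (by simpa using h)).trans (hOhat.2 e (by simpa using h)).symm)
    rw [Bequ_apply_swap q s t dir hdir (hO.1.eq_swap_of_ne hOhat.1 heq) heq]
    simp [heq]

end Boundary

section Reorientation

variable {V E : Type} [Fintype V] [Fintype E] [DecidableEq V] [DecidableEq E]
    {q : ℝ} {s t : E → V} {dir : E → Bool} {σe σi : ℂ → ℂ} {de di ke kie ki kei : ℕ → ℕ}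
    {hequ : ∀ l, Matrix V (Fin (de l)) ℂ → Matrix V (Fin (ke l)) ℂ}
    {hie : ∀ l, Matrix V (Fin (di l)) ℂ → Matrix V (Fin (kie l)) ℂ}
    {hinv : ∀ l, Matrix V (Fin (di l)) ℂ → Matrix V (Fin (ki l)) ℂ}
    {hei : ∀ l, Matrix V (Fin (de l)) ℂ → Matrix V (Fin (kei l)) ℂ}
    {Wee : ∀ l, Matrix (Fin (ke l)) (Fin (de (l + 1))) ℂ}
    {Wie : ∀ l, Matrix (Fin (kie l)) (Fin (de (l + 1))) ℂ}
    {We : ∀ l, Matrix (Fin (de l)) (Fin (de (l + 1))) ℂ}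
    {Wii : ∀ l, Matrix (Fin (ki l)) (Fin (di (l + 1))) ℂ}
    {Wei : ∀ l, Matrix (Fin (kei l)) (Fin (di (l + 1))) ℂ}
    {Wi : ∀ l, Matrix (Fin (di l)) (Fin (di (l + 1))) ℂ}
    {WFee : ∀ l, Matrix (Fin (de (l + 1))) (Fin (de (l + 1))) ℂ}
    {WFie : ∀ l, Matrix (Fin (di (l + 1))) (Fin (de (l + 1))) ℂ}
    {WFii : ∀ l, Matrix (Fin (di (l + 1))) (Fin (di (l + 1))) ℂ}
    {WFei : ∀ l, Matrix (Fin (de (l + 1))) (Fin (di (l + 1))) ℂ}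

theorem EIGN_reorient {O Ohat : E → V × V} {d : E → ℂ} (hd : ∀ e, d e = 1 ∨ d e = -1)
    (hσe : ∀ x, σe (-x) = -σe x)
    (hB : Bequ q s t dir Ohat * diagonal d = Bequ q s t dir O)
    (Xe : Matrix E (Fin (de 0)) ℂ) (Xi : Matrix E (Fin (di 0)) ℂ) (l : ℕ) :
    EIGN q s t dir σe σi de di ke kie ki kei hequ hie hinv hei
        Wee Wie We Wii Wei Wi WFee WFie WFii WFei Ohat (diagonal d * Xe) Xi l
      = (diagonal d * (EIGN q s t dir σe σi de di ke kie ki kei hequ hie hinv hei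
            Wee Wie We Wii Wei Wi WFee WFie WFii WFei O Xe Xi l).1,
         (EIGN q s t dir σe σi de di ke kie ki kei hequ hie hinv hei
            Wee Wie We Wii Wei Wi WFee WFie WFii WFei O Xe Xi l).2) := by
  have hB' : Bequ q s t dir Ohat = Bequ q s t dir O * diagonal d := by
    rw [← hB, Matrix.mul_assoc, diagonal_mul_diagonal_self_of_sign hd, Matrix.mul_one]
  have hBH : (Bequ q s t dir Ohat)ᴴ = diagonal d * (Bequ q s t dir O)ᴴ := by
    rw [hB', conjTranspose_mul, diagonal_conjTranspose_of_sign hd]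
  have hBd {n : Type} (M : Matrix E n ℂ) :
      Bequ q s t dir Ohat * (diagonal d * M) = Bequ q s t dir O * M := by
    rw [← Matrix.mul_assoc, hB]
  have hnorm : ∀ e, ‖d e‖ = 1 := fun e => by rcases hd e with h | h <;> simp [h]
  induction l with
  | zero => rfl
  | succ l ih =>
    simp only [EIGN, ih, hBH, hBd, Matrix.mul_assoc, ← Matrix.mul_add,
      diagonal_mul_map_of_odd hd hσe, diagonal_mul_hadamard, diagonal_mul_map_norm hnorm]

end Reorientation

theorem eign_inv_output_jointly_orientation_invariant_general
    {V E : Type} [Fintype V] [Fintype E] [DecidableEq V] [DecidableEq E]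
    (q : ℝ) (s t : E → V) (dir : E → Bool)
    (σe σi : ℂ → ℂ) (hσe : ∀ x, σe (-x) = -σe x)
    (de di ke kie ki kei : ℕ → ℕ)
    (hequ : ∀ l, Matrix V (Fin (de l)) ℂ → Matrix V (Fin (ke l)) ℂ)
    (hie : ∀ l, Matrix V (Fin (di l)) ℂ → Matrix V (Fin (kie l)) ℂ)
    (hinv : ∀ l, Matrix V (Fin (di l)) ℂ → Matrix V (Fin (ki l)) ℂ)
    (hei : ∀ l, Matrix V (Fin (de l)) ℂ → Matrix V (Fin (kei l)) ℂ)
    (Wee : ∀ l, Matrix (Fin (ke l)) (Fin (de (l + 1))) ℂ)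
    (Wie : ∀ l, Matrix (Fin (kie l)) (Fin (de (l + 1))) ℂ)
    (We : ∀ l, Matrix (Fin (de l)) (Fin (de (l + 1))) ℂ)
    (Wii : ∀ l, Matrix (Fin (ki l)) (Fin (di (l + 1))) ℂ)
    (Wei : ∀ l, Matrix (Fin (kei l)) (Fin (di (l + 1))) ℂ)
    (Wi : ∀ l, Matrix (Fin (di l)) (Fin (di (l + 1))) ℂ)
    (WFee : ∀ l, Matrix (Fin (de (l + 1))) (Fin (de (l + 1))) ℂ)
    (WFie : ∀ l, Matrix (Fin (di (l + 1))) (Fin (de (l + 1))) ℂ)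
    (WFii : ∀ l, Matrix (Fin (di (l + 1))) (Fin (di (l + 1))) ℂ)
    (WFei : ∀ l, Matrix (Fin (de (l + 1))) (Fin (di (l + 1))) ℂ)
    (O Ohat : E → V × V)
    (hO : DirConsistent s t dir O) (hOhat : DirConsistent s t dir Ohat)
    (Xe : Matrix E (Fin (de 0)) ℂ) (Xi : Matrix E (Fin (di 0)) ℂ) (L : ℕ) :
    (EIGN q s t dir σe σi de di ke kie ki kei hequ hie hinv hei
        Wee Wie We Wii Wei Wi WFee WFie WFii WFei Ohat (Delta O Ohat * Xe) Xi L).2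
      = (EIGN q s t dir σe σi de di ke kie ki kei hequ hie hinv hei
          Wee Wie We Wii Wei Wi WFee WFie WFii WFei O Xe Xi L).2 := by
  have hsign : ∀ e, (if O e = Ohat e then (1 : ℂ) else -1) = 1 ∨
      (if O e = Ohat e then (1 : ℂ) else -1) = -1 := fun e => by split_ifs <;> simp
  rw [Delta, EIGN_reorient hsign hσe (Bequ_mul_Delta q s t dir hO hOhat)]

/-- The invariant output of EIGN is a jointly orientation-invariant mapping:
`H^L_inv(Δ_{O,Ô} X_equ, X_inv, Ô) = H^L_inv(X_equ, X_inv, O)`. -/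
theorem eign_inv_output_jointly_orientation_invariant
    {V E : Type} [Fintype V] [Fintype E] [DecidableEq V] [DecidableEq E]
    (q : ℝ) (s t : E → V) (hst : ∀ e, s e ≠ t e) (dir : E → Bool)
    (σe σi : ℂ → ℂ) (hσe : ∀ x, σe (-x) = -σe x)
    (de di ke kie ki kei : ℕ → ℕ)
    (hequ : ∀ l, Matrix V (Fin (de l)) ℂ → Matrix V (Fin (ke l)) ℂ)
    (hie : ∀ l, Matrix V (Fin (di l)) ℂ → Matrix V (Fin (kie l)) ℂ)
    (hinv : ∀ l, Matrix V (Fin (di l)) ℂ → Matrix V (Fin (ki l)) ℂ)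
    (hei : ∀ l, Matrix V (Fin (de l)) ℂ → Matrix V (Fin (kei l)) ℂ)
    (Wee : ∀ l, Matrix (Fin (ke l)) (Fin (de (l + 1))) ℂ)
    (Wie : ∀ l, Matrix (Fin (kie l)) (Fin (de (l + 1))) ℂ)
    (We : ∀ l, Matrix (Fin (de l)) (Fin (de (l + 1))) ℂ)
    (Wii : ∀ l, Matrix (Fin (ki l)) (Fin (di (l + 1))) ℂ)
    (Wei : ∀ l, Matrix (Fin (kei l)) (Fin (di (l + 1))) ℂ)
    (Wi : ∀ l, Matrix (Fin (di l)) (Fin (di (l + 1))) ℂ)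
    (WFee : ∀ l, Matrix (Fin (de (l + 1))) (Fin (de (l + 1))) ℂ)
    (WFie : ∀ l, Matrix (Fin (di (l + 1))) (Fin (de (l + 1))) ℂ)
    (WFii : ∀ l, Matrix (Fin (di (l + 1))) (Fin (di (l + 1))) ℂ)
    (WFei : ∀ l, Matrix (Fin (de (l + 1))) (Fin (di (l + 1))) ℂ)
    (O Ohat : E → V × V)
    (hO : DirConsistent s t dir O) (hOhat : DirConsistent s t dir Ohat)
    (Xe : Matrix E (Fin (de 0)) ℂ) (Xi : Matrix E (Fin (di 0)) ℂ) (L : ℕ) :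
    (EIGN q s t dir σe σi de di ke kie ki kei hequ hie hinv hei
        Wee Wie We Wii Wei Wi WFee WFie WFii WFei Ohat (Delta O Ohat * Xe) Xi L).2
      = (EIGN q s t dir σe σi de di ke kie ki kei hequ hie hinv hei
          Wee Wie We Wii Wei Wi WFee WFie WFii WFei O Xe Xi L).2 :=
  eign_inv_output_jointly_orientation_invariant_general q s t dir σe σi hσe de di ke kie ki kei hequ
    hie hinv hei Wee Wie We Wii Wei Wi WFee WFie WFii WFei O Ohat hO hOhat Xe Xi L
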